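/- Let b = 0 or 1 and let γ : G → H = G/S₀ be a contraction. For T ∈ A^b_H define γ* T := T ∪ (G−T)_br if b = 0 and γ* T := T if b = 1. Then: (a) γ* T ∈ A^b_G and g(H − T) = g(G − γ* T); (b) if R ∈ A^b_H with T ⊆ R then γ* T ⊆ γ* R; (c) if δ : H → J is a contraction then (δ ∘ γ)* = γ* ∘ δ*. In other words, G ↦ A^b_G together with γ ↦ γ* is a grading-preserving contravariant functor from graphs with contractions to posets. -/

import Mathlib

/-!
Common framework: finite vertex-weighted multigraphs (loops and multiple edges
allowed), generalized orientations, divisors, contractions, and poset gadgets.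

A graph is encoded by a finite set `V ⊆ ℕ` of vertices, a finite set `E ⊆ ℕ`
of edges, an "ends" function assigning to each edge its ordered pair of
end-vertices (the two components encode the two half-edges), and a weight
function `w : ℕ → ℕ`.

A generalized orientation is a function `ℕ → Option EdgeDir`, where `none`
means the edge is absent (an orientation on a spanning subgraph `G − S` takes
the value `none` exactly on edges outside `E \ S`), `fwd`/`bwd` give the edge a
single direction, and `bi` makes the edge bioriented.
-/

open scoped Classical
open Finset

/-- Direction of an edge under a generalized orientation. -/
inductive EdgeDir : Type
  | fwd
  | bwd
  | bi
deriving DecidableEq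

/-- Generalized orientation data. -/
abbrev Orient : Type := ℕ → Option EdgeDir

/-- The number of ending (target) half-edges at the vertex `v` of an edge with
end-pair `p`, given its direction `d`.  A one-way oriented edge has exactly
one target end; a bioriented edge has both ends as targets. -/
def dirT : Option EdgeDir → ℕ × ℕ → ℕ → ℕ
  | none, _, _ => 0
  | some EdgeDir.fwd, p, v => if p.2 = v then 1 else 0
  | some EdgeDir.bwd, p, v => if p.1 = v then 1 else 0
  | some EdgeDir.bi, p, v => (if p.1 = v then 1 else 0) + (if p.2 = v then 1 else 0)

/-- Restriction of orientation data to the set `D` of kept edges. -/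
def restr (O : Orient) (D : Finset ℕ) : Orient := fun e => if e ∈ D then O e else none

/-- A finite vertex-weighted multigraph. -/
structure WGraph : Type where
  V : Finset ℕ
  E : Finset ℕ
  ends : ℕ → ℕ × ℕ
  w : ℕ → ℕ
  ends_mem : ∀ e ∈ E, (ends e).1 ∈ V ∧ (ends e).2 ∈ V

namespace WGraph

variable (G : WGraph)

/-- Edge set of the induced subgraph `(G−S)[Z]`: edges of `G − S` with both
ends in `Z`. -/
def indEdges (S Z : Finset ℕ) : Finset ℕ :=
  (G.E \ S).filter fun e => (G.ends e).1 ∈ Z ∧ (G.ends e).2 ∈ Z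

/-- The cut `E(Z, Zᶜ)` in `G − S`: edges of `G − S` with exactly one end in `Z`. -/
def cutEdges (S Z : Finset ℕ) : Finset ℕ :=
  (G.E \ S).filter fun e =>
    ((G.ends e).1 ∈ Z ∧ (G.ends e).2 ∉ Z) ∨ ((G.ends e).1 ∉ Z ∧ (G.ends e).2 ∈ Z)

/-- Adjacency via an edge belonging to `F ∩ E`. -/
def adjOn (F : Finset ℕ) (u v : ℕ) : Prop :=
  ∃ e ∈ F ∩ G.E, G.ends e = (u, v) ∨ G.ends e = (v, u)

/-- Number of connected components of the subgraph with vertex set `W` and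
edge set `F`. -/
noncomputable def ncomp (W F : Finset ℕ) : ℕ :=
  Nat.card (Quot (fun u v : {x : ℕ // x ∈ W} => G.adjOn F u.1 v.1))

/-- The subgraph with vertex set `W` and edge set `F` is connected. -/
def ConnSub (W F : Finset ℕ) : Prop := G.ncomp W F = 1

/-- `G` is connected. -/
def Connected : Prop := G.ConnSub G.V G.E

/-- Genus of the subgraph with vertex set `W` and edge set `F`:
`∑_{v ∈ W} w(v) − |W| + |F| + c`. -/
noncomputable def subGenus (W F : Finset ℕ) : ℤ :=
  (∑ v ∈ W, (G.w v : ℤ)) - (W.card : ℤ) + (((F ∩ G.E).card : ℤ)) + (G.ncomp W F : ℤ)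

/-- The genus of `G`. -/
noncomputable def genus : ℤ := G.subGenus G.V G.E

/-- The degree of a vertex: the number of half-edges having `v` as end. -/
def deg (v : ℕ) : ℕ :=
  ∑ e ∈ G.E, ((if (G.ends e).1 = v then 1 else 0) + (if (G.ends e).2 = v then 1 else 0))

/-- `e` is a bridge of `G − S`: removing it increases the number of connected
components. -/
def IsBridge (S : Finset ℕ) (e : ℕ) : Prop :=
  e ∈ G.E \ S ∧ G.ncomp G.V (G.E \ S) < G.ncomp G.V (G.E \ insert e S)

/-- The set of bridges of `G − S`. -/
noncomputable def bridges (S : Finset ℕ) : Finset ℕ := (G.E \ S).filter (G.IsBridge S)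

/-- `T` is a cut of `G`, i.e. `T = E(Z, Zᶜ)` for some `∅ ⊊ Z ⊊ V`. -/
def IsCut (T : Finset ℕ) : Prop :=
  ∃ Z, Z ⊆ G.V ∧ Z.Nonempty ∧ Z ≠ G.V ∧ T = G.cutEdges ∅ Z

/-- `W` is (the vertex set of) a connected component of `G − S`. -/
def IsCompOf (S W : Finset ℕ) : Prop :=
  W ⊆ G.V ∧ W.Nonempty ∧ G.ConnSub W (G.indEdges S W) ∧ G.cutEdges S W = ∅

/-- The poset `A^b_G`: for `b = 0` the sets `S ⊆ E` with `G − S` bridgeless,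
for `b = 1` the sets `S ⊆ E` with `G − S` connected. -/
def Ab (b : ℕ) (S : Finset ℕ) : Prop :=
  S ⊆ G.E ∧ ((b = 0 ∧ ∀ e, ¬ G.IsBridge S e) ∨ (b = 1 ∧ G.ConnSub G.V (G.E \ S)))

/-- `G` is a stable graph of genus `g`: connected, of genus `g`, and every
vertex of weight `0` has degree at least `3`. -/
noncomputable def Stable (g : ℕ) : Prop :=
  G.Connected ∧ G.genus = (g : ℤ) ∧ ∀ v ∈ G.V, G.w v = 0 → 3 ≤ G.deg v

/-! ### Generalized orientations on spanning subgraphs -/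

/-- `O` is orientation data for the spanning subgraph `G − S` (it is defined
exactly on the edges of `G − S`). -/
def IsOrientOn (S : Finset ℕ) (O : Orient) : Prop :=
  ∀ e, O e ≠ none ↔ e ∈ G.E \ S

/-- The set of bioriented edges of `O`. -/
def biE (O : Orient) : Finset ℕ := G.E.filter fun e => O e = some EdgeDir.bi

/-- `t^O_v`: the number of half-edges having `v` as target. -/
def tOr (O : Orient) (v : ℕ) : ℕ := ∑ e ∈ G.E, dirT (O e) (G.ends e) v

/-- `t^O(Z)`: the number of edges of `G − S` not contained in `(G−S)[Z]`
having a target in `Z`. -/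
def tCut (S : Finset ℕ) (O : Orient) (Z : Finset ℕ) : ℕ :=
  ∑ e ∈ (G.E \ S) \ G.indEdges S Z, ∑ v ∈ Z, dirT (O e) (G.ends e) v

/-- The divisor `d^O` of a `b`-orientation `O` on `G − S`:
`d^O_v = w(v) − 1 + t^O_v` if `G − S` has edges, and `d^O_v = w(v) − 1 + b`
otherwise; it is supported on `V`. -/
noncomputable def divOr (S : Finset ℕ) (b : ℕ) (O : Orient) : ℕ → ℤ :=
  fun v => if v ∈ G.V then
      (if G.E \ S = ∅ then (G.w v : ℤ) - 1 + (b : ℤ) else (G.w v : ℤ) - 1 + (G.tOr O v : ℤ))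
    else 0

/-- Equivalence of generalized orientations on `G − S`:  both are orientations
on `G − S` and they have the same divisor. -/
noncomputable def equivOr (S : Finset ℕ) (b : ℕ) (O O' : Orient) : Prop :=
  G.IsOrientOn S O ∧ G.IsOrientOn S O' ∧ G.divOr S b O = G.divOr S b O'

/-- `O` is a totally cyclic orientation on `G − S`: every nonempty cut
`E(Z,Zᶜ)` contains an edge with target in `Z` and an edge with target in `Zᶜ`. -/
def TotCyc (S : Finset ℕ) (O : Orient) : Prop :=
  ∀ Z : Finset ℕ, Z ⊆ G.V → Z.Nonempty → Z ≠ G.V → (G.cutEdges S Z).Nonempty →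
    (∃ e ∈ G.cutEdges S Z, ∃ v ∈ Z, 0 < dirT (O e) (G.ends e) v) ∧
    (∃ e ∈ G.cutEdges S Z, ∃ v ∈ G.V \ Z, 0 < dirT (O e) (G.ends e) v)

/-- `O` is `e₀`-rooted on `G − S`: for every `Z ⊊ V` with `e₀` an edge of
`(G−S)[Z]`, the cut `E(Z,Zᶜ)` contains an edge with target in `Zᶜ`. -/
def RootedAt (S : Finset ℕ) (O : Orient) (e₀ : ℕ) : Prop :=
  ∀ Z : Finset ℕ, Z ⊆ G.V → Z ≠ G.V → e₀ ∈ G.indEdges S Z →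
    ∃ e ∈ G.cutEdges S Z, ∃ v ∈ G.V \ Z, 0 < dirT (O e) (G.ends e) v

/-- `O` is a rooted `1`-orientation on `G − S`:  it has exactly one bioriented
edge, at which it is rooted.  By convention, if `G − S` consists of a single
vertex (and no edges), the empty orientation is rooted. -/
def Rooted1 (S : Finset ℕ) (O : Orient) : Prop :=
  (∃ e₀, G.biE O = {e₀} ∧ G.RootedAt S O e₀) ∨ (G.E \ S = ∅ ∧ G.V.card = 1)

/-- `O ∈ 𝒪^b(G−S)`:  for `b = 0`, a totally cyclic orientation on `G − S`;
for `b = 1`, a rooted `1`-orientation on `G − S`. -/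
def MemOb (S : Finset ℕ) (b : ℕ) (O : Orient) : Prop :=
  G.IsOrientOn S O ∧
    ((b = 0 ∧ G.biE O = ∅ ∧ G.TotCyc S O) ∨ (b = 1 ∧ G.Rooted1 S O))

/-- `O` is a `b`-orientation on `G − S` (exactly `b` bioriented edges; by
convention the empty orientation on a one-vertex edgeless graph counts as a
`1`-orientation). -/
def IsbOr (S : Finset ℕ) (b : ℕ) (O : Orient) : Prop :=
  G.IsOrientOn S O ∧
    ((G.biE O).card = b ∨ (G.E \ S = ∅ ∧ G.V.card = 1 ∧ b = 1))

/-! ### Posets of orientations on spanning subgraphs -/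

/-- The order of `𝒪𝒫^b_G` on pairs `(S, O_S)`:  `(S,O_S) ≤ (T,O_T)` iff
`T ⊆ S` and the restriction of `O_T` to `G − S` is `O_S`. -/
def leOP (p q : Finset ℕ × Orient) : Prop :=
  q.1 ⊆ p.1 ∧ restr q.2 (G.E \ p.1) = p.2

/-- The order of `𝒪̄𝒫^b_G` on pairs (representing classes): `(S,O̅_S) ≤ (T,O̅_T)`
iff `T ⊆ S` and some representative of `O̅_T` restricts on `G − S` to some
representative of `O̅_S`. -/
noncomputable def leOPbar (b : ℕ) (p q : Finset ℕ × Orient) : Prop :=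
  q.1 ⊆ p.1 ∧ ∃ O', G.equivOr q.1 b O' q.2 ∧
    G.equivOr p.1 b (restr O' (G.E \ p.1)) p.2

/-- Equality in `𝒪̄𝒫^b_G`: same subgraph and equivalent orientations. -/
noncomputable def eqOP (b : ℕ) (p q : Finset ℕ × Orient) : Prop :=
  p.1 = q.1 ∧ G.equivOr p.1 b p.2 q.2

/-- Membership in `𝒪𝒫^b_G`. -/
def POb (b : ℕ) (p : Finset ℕ × Orient) : Prop :=
  G.Ab b p.1 ∧ G.MemOb p.1 b p.2

/-! ### Stable divisors -/

/-- Stable divisors on `G − S` of degree `g(G−S) − c(G−S) + b` (`b = 0, 1`):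
for `b = 1`, `G − S` is connected, the degree is `g(G−S)` and
`|d_Z| > g(Z) − 1` for every `Z ⊆ V`; for `b = 0`, the restriction of `d` to
every connected component `W` of `G − S` has degree `g(W) − 1` and satisfies
`|d_Z| > g(Z) − 1` for every `∅ ≠ Z ⊊ W`. -/
noncomputable def StableDiv (S : Finset ℕ) (b : ℕ) (d : ℕ → ℤ) : Prop :=
  (∀ v, v ∉ G.V → d v = 0) ∧
  ((b = 1 ∧ G.ConnSub G.V (G.E \ S) ∧
      (∑ v ∈ G.V, d v) = G.subGenus G.V (G.E \ S) ∧
      ∀ Z ⊆ G.V, G.subGenus Z (G.indEdges S Z) - 1 < ∑ v ∈ Z, d v) ∨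
   (b = 0 ∧ ∀ W, G.IsCompOf S W →
      (∑ v ∈ W, d v) = G.subGenus W (G.indEdges S W) - 1 ∧
      ∀ Z ⊆ W, Z.Nonempty → Z ≠ W →
        G.subGenus Z (G.indEdges S Z) - 1 < ∑ v ∈ Z, d v))

/-! ### Contractions -/

/-- The relation identifying the two ends of each edge in `S₀`. -/
def conRel (S₀ : Finset ℕ) (u v : ℕ) : Prop :=
  ∃ e ∈ S₀ ∩ G.E, G.ends e = (u, v) ∨ G.ends e = (v, u)

/-- Representative (the least element) of the class of `v` under the
equivalence generated by identifying the ends of the edges in `S₀`. -/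
noncomputable def crep (S₀ : Finset ℕ) (v : ℕ) : ℕ :=
  sInf {u | Relation.EqvGen (G.conRel S₀) u v}

/-- The (weighted) edge contraction `G/S₀`: every connected component of the
subgraph spanned by `S₀` is contracted to a single vertex, whose weight is the
genus of that component; `E(G/S₀) = E(G) \ S₀`. -/
noncomputable def contract (S₀ : Finset ℕ) : WGraph where
  V := G.V.image (G.crep S₀)
  E := G.E \ S₀
  ends := fun e => (G.crep S₀ (G.ends e).1, G.crep S₀ (G.ends e).2)
  w := fun v =>
    (G.subGenus (G.V.filter fun u => G.crep S₀ u = v)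
      (G.indEdges (G.E \ S₀) (G.V.filter fun u => G.crep S₀ u = v))).toNat
  ends_mem := by
    intro e he
    rw [Finset.mem_sdiff] at he
    exact ⟨Finset.mem_image_of_mem _ (G.ends_mem e he.1).1,
           Finset.mem_image_of_mem _ (G.ends_mem e he.1).2⟩

/-- Deletion of the edges in `T` (a spanning subgraph, as a graph). -/
def ddel (T : Finset ℕ) : WGraph where
  V := G.V
  E := G.E \ T
  ends := G.ends
  w := G.w
  ends_mem := fun e he => G.ends_mem e (Finset.mem_sdiff.mp he).1

/-- Pullback `γ* T` of an edge set along the contraction `γ : G → G/S₀`: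
`T ∪ (G−T)_br` for `b = 0`, and `T` for `b = 1`. -/
noncomputable def pullStar (b : ℕ) (T : Finset ℕ) : Finset ℕ :=
  if b = 0 then T ∪ G.bridges T else T

/-- Pushforward of a divisor along the contraction `γ : G → G/S₀`:
`(γ_* d)_v = ∑_{z ∈ γ⁻¹(v)} d_z`. -/
noncomputable def pushDiv (S₀ : Finset ℕ) (d : ℕ → ℤ) : ℕ → ℤ :=
  fun v => ∑ z ∈ G.V.filter (fun u => G.crep S₀ u = v), d z

/-- The divisor `c^{γ,S}` on `G/S₀`: `c^{γ,S}_v = #{e ∈ S₀ ∩ S : γ(e) = v}`. -/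
noncomputable def cGamma (S₀ S : Finset ℕ) : ℕ → ℤ :=
  fun v => ((((S₀ ∩ S) ∩ G.E).filter (fun e => G.crep S₀ (G.ends e).1 = v)).card : ℤ)

/-- The relation "`q` is a value of `γ̄_*` at `p`" for the contraction
`γ : G → G/S₀` acting on classes of orientations: `q` is the restriction to
`(G/S₀) − γ_* S` of a representative of the class of `p` having no bioriented
edge in `S₀` (when `(G/S₀) − γ_*S` has no edges, any representative serves). -/
noncomputable def pushRel (S₀ : Finset ℕ) (b : ℕ) (p q : Finset ℕ × Orient) : Prop :=
  ∃ O', G.equivOr p.1 b O' p.2 ∧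
    ((∀ e ∈ S₀, O' e ≠ some EdgeDir.bi) ∨ G.E \ (S₀ ∪ p.1) = ∅) ∧
    q.1 = p.1 \ S₀ ∧ q.2 = restr O' (G.E \ (S₀ ∪ p.1))

/-! ### Isomorphisms and directed reachability -/

/-- `(fV, fE)` is an isomorphism from `G` to `H`. -/
def IsoMaps (H : WGraph) (fV fE : ℕ → ℕ) : Prop :=
  Set.BijOn fV ↑G.V ↑H.V ∧ Set.BijOn fE ↑G.E ↑H.E ∧
  (∀ e ∈ G.E, H.ends (fE e) = (fV (G.ends e).1, fV (G.ends e).2) ∨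
              H.ends (fE e) = (fV (G.ends e).2, fV (G.ends e).1)) ∧
  (∀ v ∈ G.V, H.w (fV v) = G.w v)

/-- `G` and `H` are isomorphic graphs. -/
def Iso (H : WGraph) : Prop := ∃ fV fE, G.IsoMaps H fV fE

/-- The edge-contraction relation: `G ≤ H` iff `H = G/S₀` (up to isomorphism)
for some `S₀ ⊆ E(G)`. -/
noncomputable def contractLE (H : WGraph) : Prop :=
  ∃ S₀ ⊆ G.E, (G.contract S₀).Iso H

/-- One step from `u` to `v` along an `O`-directed edge (a bioriented edge may
be traversed in both directions). -/
def dirStep (O : Orient) (u v : ℕ) : Prop :=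
  ∃ e ∈ G.E,
    (O e = some EdgeDir.fwd ∧ G.ends e = (u, v)) ∨
    (O e = some EdgeDir.bwd ∧ G.ends e = (v, u)) ∨
    (O e = some EdgeDir.bi ∧ (G.ends e = (u, v) ∨ G.ends e = (v, u)))

/-- There is an `O`-directed path from the (bioriented) edge `e` to the
vertex `v`: a directed path starting at one of the ends of `e` and ending
at `v`. -/
def dirReachFromEdge (O : Orient) (e v : ℕ) : Prop :=
  ∃ u, ((G.ends e).1 = u ∨ (G.ends e).2 = u) ∧
    Relation.ReflTransGen (G.dirStep O) u v

end WGraph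

/-! ### Generic poset gadgets (for sets with an order, modulo an equivalence) -/

/-- `le` is a partial order on `{a | P a}` modulo the identification `eqv`. -/
def IsPartialOrderOnMod {α : Type*} (P : α → Prop) (eqv le : α → α → Prop) : Prop :=
  (∀ a, P a → le a a) ∧
  (∀ a b c, P a → P b → P c → le a b → le b c → le a c) ∧
  (∀ a b, P a → P b → le a b → le b a → eqv a b)

/-- `le` is a partial order on `{a | P a}`. -/
def IsPartialOrderOn {α : Type*} (P : α → Prop) (le : α → α → Prop) : Prop :=
  IsPartialOrderOnMod P (· = ·) le

/-- `a'` covers `a` in `{a | P a}` ordered by `le`, modulo `eqv`. -/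
def CoversOnMod {α : Type*} (P : α → Prop) (eqv le : α → α → Prop) (a a' : α) : Prop :=
  P a ∧ P a' ∧ le a a' ∧ ¬ eqv a a' ∧
    ∀ c, P c → le a c → le c a' → (eqv c a ∨ eqv c a')

/-- `ρ` is a rank on `{a | P a}` ordered by `le`, modulo `eqv`:  along every
covering relation it increases by exactly `1`. -/
def IsRankOnMod {α : Type*} (P : α → Prop) (eqv le : α → α → Prop) (ρ : α → ℕ) : Prop :=
  ∀ a a', CoversOnMod P eqv le a a' → ρ a' = ρ a + 1

/-- `a'` covers `a` in `{a | P a}` ordered by `le`. -/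
def CoversOn {α : Type*} (P : α → Prop) (le : α → α → Prop) : α → α → Prop :=
  CoversOnMod P (· = ·) le

/-- `ρ` is a rank on `{a | P a}` ordered by `le`. -/
def IsRankOn {α : Type*} (P : α → Prop) (le : α → α → Prop) (ρ : α → ℕ) : Prop :=
  IsRankOnMod P (· = ·) le ρ

/-- `f` is a quotient of posets from `({a | P a}, lea)` onto `({b | Q b}, leb)`:
an order-preserving surjection such that any relation downstairs lifts to a
relation upstairs. -/
def IsPosetQuotient {α β : Type*} (P : α → Prop) (Q : β → Prop)
    (lea : α → α → Prop) (leb : β → β → Prop) (f : α → β) : Prop :=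
  (∀ a, P a → Q (f a)) ∧
  (∀ a a', P a → P a' → lea a a' → leb (f a) (f a')) ∧
  (∀ b, Q b → ∃ a, P a ∧ f a = b) ∧
  (∀ b b', Q b → Q b' → leb b b' →
    ∃ a a', P a ∧ P a' ∧ f a = b ∧ f a' = b' ∧ lea a a')

/-! ### Structures over the moduli of stable graphs -/

/-- Pairs `(G, S)` with `G` stable of genus `g` and `S ∈ A^b_G`. -/
noncomputable def PairStab (g b : ℕ) (p : WGraph × Finset ℕ) : Prop :=
  p.1.Stable g ∧ p.1.Ab b p.2

/-- Isomorphism of pairs `(G, S)`. -/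
def PairIso (p q : WGraph × Finset ℕ) : Prop :=
  ∃ fV fE, p.1.IsoMaps q.1 fV fE ∧ p.2.image fE = q.2

/-- The order on `A^b_g`: `(G,S) ≤ (H,T)` iff there is a contraction
`γ : G → H` (a contraction of `G` followed by an isomorphism onto `H`) with
`γ* T ⊆ S`. -/
noncomputable def AgLE (b : ℕ) (p q : WGraph × Finset ℕ) : Prop :=
  ∃ S₀ ⊆ p.1.E, ∃ fV fE, (p.1.contract S₀).IsoMaps q.1 fV fE ∧
    p.1.pullStar b (((p.1.contract S₀).E).filter fun e => fE e ∈ q.2) ⊆ p.2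

/-- Triples `(G, S, O̅_S)` with `G` stable of genus `g`, `S ∈ A^b_G` and
`O_S ∈ 𝒪^b(G−S)` (representing elements of `𝒪̄𝒫^b_g`). -/
noncomputable def TripP (g b : ℕ) (x : WGraph × Finset ℕ × Orient) : Prop :=
  x.1.Stable g ∧ x.1.Ab b x.2.1 ∧ x.1.MemOb x.2.1 b x.2.2

/-- Identification of triples: an isomorphism of the underlying graphs
carrying the subgraph and the class of the orientation (i.e. its divisor) of
one to the other. -/
noncomputable def TripEq (b : ℕ) (x y : WGraph × Finset ℕ × Orient) : Prop :=
  ∃ fV fE, x.1.IsoMaps y.1 fV fE ∧ x.2.1.image fE = y.2.1 ∧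
    ∀ v ∈ x.1.V, y.1.divOr y.2.1 b y.2.2 (fV v) = x.1.divOr x.2.1 b x.2.2 v

/-- The order on `𝒪̄𝒫^b_g`: `(G, O̅_S) ≤ (H, O̅_T)` iff there is a contraction
`γ : G → H` with `γ* T ⊆ S` and `γ̄_* O̅_S ≤ O̅_T`, the latter meaning that the
restriction of `O̅_T` to `H − γ_* S` equals `γ̄_* O̅_S` (compared through the
isomorphism, via the divisors). -/
noncomputable def OPgLE (b : ℕ) (x y : WGraph × Finset ℕ × Orient) : Prop :=
  ∃ S₀ ⊆ x.1.E, ∃ fV fE, (x.1.contract S₀).IsoMaps y.1 fV fE ∧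
    x.1.pullStar b (((x.1.contract S₀).E).filter fun e => fE e ∈ y.2.1) ⊆ x.2.1 ∧
    ∃ O', x.1.equivOr x.2.1 b O' x.2.2 ∧
      ((∀ e ∈ S₀, O' e ≠ some EdgeDir.bi) ∨ x.1.E \ (S₀ ∪ x.2.1) = ∅) ∧
      ∀ v ∈ (x.1.contract S₀).V,
        y.1.divOr ((x.2.1 \ S₀).image fE) b
            (restr y.2.2 (y.1.E \ (x.2.1 \ S₀).image fE)) (fV v)
          = (x.1.contract S₀).divOr (x.2.1 \ S₀) b
              (restr O' (x.1.E \ (S₀ ∪ x.2.1))) v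

/-!
Each vertex of `G/S₀` is a connected component of the subgraph spanned by `S₀` and carries its
genus as weight, so for `T` disjoint from `S₀` the graphs `(G/S₀) − T` and `G − T` have the
same number of components and the same genus, and the bridges of `(G/S₀) − T` are those of
`G − T` outside `S₀`. Deleting a set of bridges lowers the number of edges and raises the
number of components by the same amount, so it keeps the genus, and it creates no new
bridges; thus `G − (T ∪ (G−T)_br)` is bridgeless of genus `g(G − T)`. Functoriality reduces
to `U ∪ (B \ S₀) ∪ (B \ (B \ S₀)) = U ∪ B` for the bridges `B` of `G − U`.
-/

namespace Relation

variable {α β : Type*} {r : α → α → Prop}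

theorem EqvGen.apply_eq {f : α → β} (hf : ∀ x y, r x y → f x = f y) {x y : α}
    (h : EqvGen r x y) : f x = f y :=
  congrArg (Quot.lift f hf) (Quot.eqvGen_sound h)

theorem EqvGen.map {s : β → β → Prop} {f : α → β}
    (hf : ∀ x y, r x y → EqvGen s (f x) (f y)) {x y : α} (h : EqvGen r x y) :
    EqvGen s (f x) (f y) :=
  Quot.eqvGen_exact <| EqvGen.apply_eq (f := fun x => Quot.mk s (f x))
    (fun x y hxy => Quot.eqvGen_sound (hf x y hxy)) h

theorem eqvGen_subtype_iff {p : α → Prop} (hp : ∀ x y, r x y → (p x ↔ p y))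
    (u v : Subtype p) :
    EqvGen (fun a b : Subtype p => r a b) u v ↔ EqvGen r u v := by
  refine ⟨EqvGen.map (f := Subtype.val) fun x y h => EqvGen.rel _ _ h, fun h => ?_⟩
  let f : α → Subtype p := fun x => if hx : p x then ⟨x, hx⟩ else u
  have hf : ∀ x y, r x y → EqvGen (fun a b : Subtype p => r a b) (f x) (f y) := by
    intro x y hxy
    by_cases hx : p x
    · have hy := (hp x y hxy).1 hx
      simp only [f, dif_pos hx, dif_pos hy]
      exact EqvGen.rel _ _ hxy
    · have hy : ¬ p y := mt (hp x y hxy).2 hx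
      simp only [f, dif_neg hx, dif_neg hy]
      exact EqvGen.refl _
  simpa [f, u.2, v.2] using EqvGen.map hf h

theorem card_quot_eq_of_maps {s : β → β → Prop} (π : α → β) (σ : β → α)
    (hπ : ∀ x y, r x y → EqvGen s (π x) (π y)) (hσ : ∀ x y, s x y → EqvGen r (σ x) (σ y))
    (hπσ : ∀ y, EqvGen s (π (σ y)) y) (hσπ : ∀ x, EqvGen r (σ (π x)) x) :
    Nat.card (Quot r) = Nat.card (Quot s) :=
  Nat.card_congr
    { toFun := Quot.lift (fun x => Quot.mk s (π x)) fun x y h => Quot.eqvGen_sound (hπ x y h)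
      invFun := Quot.lift (fun y => Quot.mk r (σ y)) fun x y h => Quot.eqvGen_sound (hσ x y h)
      left_inv := fun q => Quot.inductionOn q fun x => Quot.eqvGen_sound (hσπ x)
      right_inv := fun q => Quot.inductionOn q fun y => Quot.eqvGen_sound (hπσ y) }

theorem card_quot_of_forall_not (h : ∀ x y, ¬ r x y) : Nat.card (Quot r) = Nat.card α :=
  (Nat.card_eq_of_bijective (Quot.mk r)
    ⟨fun _ _ hxy => EqvGen.apply_eq (f := id) (fun x y hr => (h x y hr).elim)
      (Quot.eqvGen_exact hxy), Quot.mk_surjective⟩).symm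

section AdjoinPair

variable {s : α → α → Prop} {a b : α}

theorem eqvGen_adjoin_cases (hs : ∀ x y, s x y ↔ r x y ∨ (x = a ∧ y = b) ∨ (x = b ∧ y = a))
    {x y : α} (h : EqvGen s x y) :
    EqvGen r x y ∨ (EqvGen r x a ∧ EqvGen r b y) ∨ (EqvGen r x b ∧ EqvGen r a y) := by
  induction h with
  | rel x y h =>
    rcases (hs x y).1 h with h | ⟨rfl, rfl⟩ | ⟨rfl, rfl⟩
    · exact Or.inl (.rel _ _ h)
    · exact Or.inr (Or.inl ⟨.refl _, .refl _⟩)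
    · exact Or.inr (Or.inr ⟨.refl _, .refl _⟩)
  | refl x => exact Or.inl (.refl x)
  | symm x y _ ih =>
    rcases ih with h | ⟨h1, h2⟩ | ⟨h1, h2⟩
    · exact Or.inl (.symm _ _ h)
    · exact Or.inr (Or.inr ⟨.symm _ _ h2, .symm _ _ h1⟩)
    · exact Or.inr (Or.inl ⟨.symm _ _ h2, .symm _ _ h1⟩)
  | trans x z y _ _ ih1 ih2 =>
    rcases ih1 with h | ⟨h1, h2⟩ | ⟨h1, h2⟩ <;> rcases ih2 with g | ⟨g1, g2⟩ | ⟨g1, g2⟩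
    · exact Or.inl (h.trans _ _ _ g)
    · exact Or.inr (Or.inl ⟨h.trans _ _ _ g1, g2⟩)
    · exact Or.inr (Or.inr ⟨h.trans _ _ _ g1, g2⟩)
    · exact Or.inr (Or.inl ⟨h1, h2.trans _ _ _ g⟩)
    · exact Or.inr (Or.inl ⟨h1, g2⟩)
    · exact Or.inl (h1.trans _ _ _ g2)
    · exact Or.inr (Or.inr ⟨h1, h2.trans _ _ _ g⟩)
    · exact Or.inl (h1.trans _ _ _ g2)
    · exact Or.inr (Or.inr ⟨h1, g2⟩)

/-- In graph terms: deleting a bridge `a — b` does not turn the non-bridge `c — d` into a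
bridge. -/
theorem eqvGen_of_eqvGen_adjoin_of_not_eqvGen_adjoin {t : α → α → Prop} {c d : α}
    (hs : ∀ x y, s x y ↔ r x y ∨ (x = a ∧ y = b) ∨ (x = b ∧ y = a))
    (ht : ∀ x y, t x y ↔ r x y ∨ (x = c ∧ y = d) ∨ (x = d ∧ y = c))
    (hcd : EqvGen s c d) (hab : ¬ EqvGen t a b) : EqvGen r c d := by
  have hrt : ∀ {x y}, EqvGen r x y → EqvGen t x y := fun h =>
    EqvGen.mono (fun x y h => (ht x y).2 (Or.inl h)) _ _ h
  have htcd : EqvGen t c d := .rel _ _ ((ht c d).2 (Or.inr (Or.inl ⟨rfl, rfl⟩)))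
  rcases eqvGen_adjoin_cases hs hcd with h | ⟨hca, hbd⟩ | ⟨hcb, had⟩
  · exact h
  · exact absurd (((hrt hca).symm _ _).trans _ _ _ (htcd.trans _ _ _ ((hrt hbd).symm _ _))) hab
  · exact absurd ((hrt had).trans _ _ _ ((htcd.symm _ _).trans _ _ _ (hrt hcb))) hab

theorem card_quot_eq_of_eqvGen_adjoin
    (hs : ∀ x y, s x y ↔ r x y ∨ (x = a ∧ y = b) ∨ (x = b ∧ y = a)) (hab : EqvGen r a b) :
    Nat.card (Quot r) = Nat.card (Quot s) := by
  refine card_quot_eq_of_maps id id (fun x y h => .rel _ _ ((hs x y).2 (Or.inl h)))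
    (fun x y h => ?_) (fun _ => .refl _) (fun _ => .refl _)
  rcases (hs x y).1 h with h | ⟨rfl, rfl⟩ | ⟨rfl, rfl⟩
  exacts [.rel _ _ h, hab, hab.symm _ _]

theorem card_quot_eq_add_one_of_not_eqvGen_adjoin [Finite α]
    (hs : ∀ x y, s x y ↔ r x y ∨ (x = a ∧ y = b) ∨ (x = b ∧ y = a)) (hab : ¬ EqvGen r a b) :
    Nat.card (Quot r) = Nat.card (Quot s) + 1 := by
  have hrs : ∀ x y, r x y → s x y := fun x y h => (hs x y).2 (Or.inl h)
  have hab_s : Quot.mk s a = Quot.mk s b := Quot.sound ((hs a b).2 (Or.inr (Or.inl ⟨rfl, rfl⟩)))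
  let J : Quot r → Option (Quot s) := fun q =>
    if q = Quot.mk r b then none else some (Quot.map id hrs q)
  have hJ : Function.Bijective J := by
    constructor
    · rintro ⟨x⟩ ⟨y⟩ hxy
      by_cases hx : Quot.mk r x = Quot.mk r b <;> by_cases hy : Quot.mk r y = Quot.mk r b <;>
        simp only [J, hx, hy, if_true, if_false, reduceCtorEq, Option.some_inj] at hxy
      · exact hx.trans hy.symm
      · rcases eqvGen_adjoin_cases hs (Quot.eqvGen_exact hxy) with h | ⟨_, h⟩ | ⟨h, _⟩
        · exact Quot.eqvGen_sound h
        · exact absurd (Quot.eqvGen_sound h).symm hy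
        · exact absurd (Quot.eqvGen_sound h) hx
    · rintro (_ | ⟨⟨x⟩⟩)
      · exact ⟨Quot.mk r b, if_pos rfl⟩
      by_cases hx : Quot.mk r x = Quot.mk r b
      · have ha : Quot.mk r a ≠ Quot.mk r b := fun h => hab (Quot.eqvGen_exact h)
        refine ⟨Quot.mk r a, ?_⟩
        simp only [J, if_neg ha]
        exact congrArg some (hab_s.trans ((congrArg (Quot.map id hrs) hx).symm))
      · exact ⟨Quot.mk r x, if_neg hx⟩
  rw [Nat.card_eq_of_bijective J hJ, Finite.card_option]

theorem card_quot_le_add_one [Finite α]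
    (hs : ∀ x y, s x y ↔ r x y ∨ (x = a ∧ y = b) ∨ (x = b ∧ y = a)) :
    Nat.card (Quot r) ≤ Nat.card (Quot s) + 1 := by
  by_cases hab : EqvGen r a b
  · rw [card_quot_eq_of_eqvGen_adjoin hs hab]
    exact Nat.le_succ _
  · rw [card_quot_eq_add_one_of_not_eqvGen_adjoin hs hab]

end AdjoinPair

end Relation

namespace WGraph

open Relation

variable (G : WGraph)

section Connectivity

theorem adjOn_mem_V {F : Finset ℕ} {x y : ℕ} (h : G.adjOn F x y) : x ∈ G.V ∧ y ∈ G.V := by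
  obtain ⟨e, he, h | h⟩ := h <;> have hm := G.ends_mem e (mem_inter.1 he).2 <;> rw [h] at hm
  · exact hm
  · exact hm.symm

theorem adjOn_mono {F F' : Finset ℕ} (h : F ⊆ F') : G.adjOn F ≤ G.adjOn F' :=
  fun _ _ ⟨e, he, hends⟩ => ⟨e, inter_subset_inter_right h he, hends⟩

theorem adjOn_congr {F F' : Finset ℕ} (h : F ∩ G.E = F' ∩ G.E) : G.adjOn F = G.adjOn F' := by
  unfold adjOn
  rw [h]

theorem adjOn_insert_iff {F : Finset ℕ} {e : ℕ} (he : e ∈ G.E) (x y : ℕ) :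
    G.adjOn (insert e F) x y ↔ G.adjOn F x y ∨
      (x = (G.ends e).1 ∧ y = (G.ends e).2) ∨ (x = (G.ends e).2 ∧ y = (G.ends e).1) := by
  constructor
  · rintro ⟨e', he', hends⟩
    rw [mem_inter, mem_insert] at he'
    rcases he'.1 with rfl | hF
    · rcases hends with h | h <;> simp [h]
    · exact Or.inl ⟨e', mem_inter.2 ⟨hF, he'.2⟩, hends⟩
  · rintro (h | ⟨rfl, rfl⟩ | ⟨rfl, rfl⟩)
    · exact G.adjOn_mono (subset_insert e F) _ _ h
    · exact ⟨e, mem_inter.2 ⟨mem_insert_self _ _, he⟩, Or.inl rfl⟩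
    · exact ⟨e, mem_inter.2 ⟨mem_insert_self _ _, he⟩, Or.inr rfl⟩

theorem eqvGen_adjOn_subtype_iff (F : Finset ℕ) (u v : {x // x ∈ G.V}) :
    EqvGen (fun a b : {x // x ∈ G.V} => G.adjOn F a b) u v ↔ EqvGen (G.adjOn F) u v :=
  eqvGen_subtype_iff (r := G.adjOn F) (p := (· ∈ G.V))
    (fun _ _ h => iff_of_true (G.adjOn_mem_V h).1 (G.adjOn_mem_V h).2) u v

theorem ncomp_congr (W : Finset ℕ) {F F' : Finset ℕ} (h : F ∩ G.E = F' ∩ G.E) :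
    G.ncomp W F = G.ncomp W F' := by
  rw [ncomp, ncomp, G.adjOn_congr h]

theorem ncomp_empty (W : Finset ℕ) : G.ncomp W ∅ = W.card := by
  rw [ncomp, card_quot_of_forall_not (by simp [adjOn]), Nat.card_eq_finsetCard]

theorem ncomp_le_ncomp_insert_add_one (W F : Finset ℕ) (e : ℕ) :
    G.ncomp W F ≤ G.ncomp W (insert e F) + 1 := by
  by_cases he : e ∈ G.E
  · by_cases hends : (G.ends e).1 ∈ W ∧ (G.ends e).2 ∈ W
    · refine card_quot_le_add_one (a := ⟨_, hends.1⟩) (b := ⟨_, hends.2⟩) fun u v => ?_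
      simp [G.adjOn_insert_iff he, Subtype.ext_iff]
    · have hrel : (fun u v : {x // x ∈ W} => G.adjOn (insert e F) u v)
          = fun u v : {x // x ∈ W} => G.adjOn F u v := by
        ext u v
        rw [G.adjOn_insert_iff he]
        constructor
        · rintro (h | ⟨h1, h2⟩ | ⟨h1, h2⟩)
          · exact h
          · exact absurd ⟨h1 ▸ u.2, h2 ▸ v.2⟩ hends
          · exact absurd ⟨h2 ▸ v.2, h1 ▸ u.2⟩ hends
        · exact Or.inl
      rw [ncomp, ncomp, hrel]
      exact Nat.le_succ _
  · rw [G.ncomp_congr W (F' := insert e F) (by rw [insert_inter_of_notMem he])]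
    exact Nat.le_succ _

theorem card_le_card_inter_add_ncomp (W F : Finset ℕ) :
    W.card ≤ (F ∩ G.E).card + G.ncomp W F := by
  induction F using Finset.induction_on with
  | empty => simp [ncomp_empty]
  | insert e F heF ih =>
    have hle := G.ncomp_le_ncomp_insert_add_one W F e
    by_cases he : e ∈ G.E
    · rw [insert_inter_of_mem he, card_insert_of_notMem fun h => heF (mem_inter.1 h).1]
      omega
    · rwa [insert_inter_of_notMem he, G.ncomp_congr W (F' := F)
        (by rw [insert_inter_of_notMem he])]

theorem ncomp_insert_of_eqvGen {F : Finset ℕ} {e : ℕ} (he : e ∈ G.E)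
    (h : EqvGen (G.adjOn F) (G.ends e).1 (G.ends e).2) :
    G.ncomp G.V (insert e F) = G.ncomp G.V F := by
  have hm := G.ends_mem e he
  refine (card_quot_eq_of_eqvGen_adjoin (a := ⟨_, hm.1⟩) (b := ⟨_, hm.2⟩) (fun u v => ?_)
    ((G.eqvGen_adjOn_subtype_iff F _ _).2 h)).symm
  simp [G.adjOn_insert_iff he, Subtype.ext_iff]

theorem ncomp_eq_ncomp_insert_add_one {F : Finset ℕ} {e : ℕ} (he : e ∈ G.E)
    (h : ¬ EqvGen (G.adjOn F) (G.ends e).1 (G.ends e).2) :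
    G.ncomp G.V F = G.ncomp G.V (insert e F) + 1 := by
  have hm := G.ends_mem e he
  refine card_quot_eq_add_one_of_not_eqvGen_adjoin (a := ⟨_, hm.1⟩) (b := ⟨_, hm.2⟩)
    (fun u v => ?_) (mt (G.eqvGen_adjOn_subtype_iff F _ _).1 h)
  simp [G.adjOn_insert_iff he, Subtype.ext_iff]

end Connectivity

section Bridges

theorem mem_bridges {S : Finset ℕ} {e : ℕ} : e ∈ G.bridges S ↔ G.IsBridge S e :=
  mem_filter.trans (and_iff_right_of_imp fun h => h.1)

theorem isBridge_iff {S : Finset ℕ} {e : ℕ} : G.IsBridge S e ↔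
    e ∈ G.E \ S ∧ ¬ EqvGen (G.adjOn (G.E \ insert e S)) (G.ends e).1 (G.ends e).2 := by
  refine and_congr_right fun he => ?_
  have hE := (mem_sdiff.1 he).1
  rw [show G.E \ S = insert e (G.E \ insert e S) by rw [sdiff_insert, insert_erase he]]
  by_cases h : EqvGen (G.adjOn (G.E \ insert e S)) (G.ends e).1 (G.ends e).2
  · simp [h, G.ncomp_insert_of_eqvGen hE h]
  · simp [h, G.ncomp_eq_ncomp_insert_add_one hE h]

theorem ncomp_sdiff_insert_of_isBridge {S : Finset ℕ} {f : ℕ} (hf : G.IsBridge S f) :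
    G.ncomp G.V (G.E \ insert f S) = G.ncomp G.V (G.E \ S) + 1 := by
  obtain ⟨hfS, hlink⟩ := G.isBridge_iff.1 hf
  rw [G.ncomp_eq_ncomp_insert_add_one (mem_sdiff.1 hfS).1 hlink, sdiff_insert,
    insert_erase hfS]

theorem isBridge_of_subset {S S' : Finset ℕ} {e : ℕ} (h : G.IsBridge S e) (hS : S ⊆ S')
    (he : e ∉ S') : G.IsBridge S' e := by
  obtain ⟨heS, hlink⟩ := G.isBridge_iff.1 h
  refine G.isBridge_iff.2 ⟨mem_sdiff.2 ⟨(mem_sdiff.1 heS).1, he⟩, fun h' => hlink ?_⟩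
  exact EqvGen.mono (G.adjOn_mono (sdiff_subset_sdiff le_rfl (insert_subset_insert e hS)))
    _ _ h'

theorem isBridge_insert_iff {S : Finset ℕ} {e f : ℕ} (hf : G.IsBridge S f) :
    G.IsBridge (insert f S) e ↔ G.IsBridge S e ∧ e ≠ f := by
  refine ⟨fun he => ?_, fun ⟨he, hef⟩ =>
    G.isBridge_of_subset he (subset_insert f S) (by simp [hef, (mem_sdiff.1 he.1).2])⟩
  obtain ⟨heS, hlink⟩ := G.isBridge_iff.1 he
  obtain ⟨hfS, hflink⟩ := G.isBridge_iff.1 hf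
  have hE := (mem_sdiff.1 heS).1
  have hef : e ≠ f := by rintro rfl; simp at heS
  have heS' : e ∉ S := fun h => (mem_sdiff.1 heS).2 (mem_insert_of_mem h)
  refine ⟨G.isBridge_iff.2 ⟨mem_sdiff.2 ⟨hE, heS'⟩, fun h => hlink ?_⟩, hef⟩
  have hf_e : f ∈ G.E \ insert e S := by simp [(mem_sdiff.1 hfS).1, (mem_sdiff.1 hfS).2, hef.symm]
  have he_f : e ∈ G.E \ insert f S := heS
  rw [show G.E \ insert e S = insert f (G.E \ insert f (insert e S)) by
    rw [sdiff_insert _ (insert e S), insert_erase hf_e]] at h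
  rw [show G.E \ insert f S = insert e (G.E \ insert e (insert f S)) by
    rw [sdiff_insert _ (insert f S), insert_erase he_f]] at hflink
  rw [insert_comm]
  exact eqvGen_of_eqvGen_adjoin_of_not_eqvGen_adjoin
    (G.adjOn_insert_iff (mem_sdiff.1 hfS).1) (G.adjOn_insert_iff hE) h (by rwa [insert_comm])

theorem bridges_insert {S : Finset ℕ} {f : ℕ} (hf : G.IsBridge S f) :
    G.bridges (insert f S) = (G.bridges S).erase f := by
  ext e
  simp [mem_bridges, G.isBridge_insert_iff hf, and_comm]

theorem subset_bridges_insert {S B : Finset ℕ} {f : ℕ} (hB : insert f B ⊆ G.bridges S)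
    (hf : f ∉ B) : B ⊆ G.bridges (insert f S) := by
  rw [G.bridges_insert (G.mem_bridges.1 (hB (mem_insert_self f B)))]
  exact fun g hg => mem_erase.2 ⟨fun h => hf (h ▸ hg), hB (mem_insert_of_mem hg)⟩

theorem bridges_union {S B : Finset ℕ} (hB : B ⊆ G.bridges S) :
    G.bridges (S ∪ B) = G.bridges S \ B := by
  induction B using Finset.induction_on generalizing S with
  | empty => simp
  | insert f B hf ih =>
    have hfS := G.mem_bridges.1 (hB (mem_insert_self f B))
    rw [union_insert, ← insert_union, ih (G.subset_bridges_insert hB hf), G.bridges_insert hfS,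
      erase_sdiff_comm, sdiff_insert]

theorem ncomp_sdiff_union_bridges {S B : Finset ℕ} (hB : B ⊆ G.bridges S) :
    G.ncomp G.V (G.E \ (S ∪ B)) = G.ncomp G.V (G.E \ S) + B.card := by
  induction B using Finset.induction_on generalizing S with
  | empty => simp
  | insert f B hf ih =>
    have hfS := G.mem_bridges.1 (hB (mem_insert_self f B))
    rw [union_insert, ← insert_union, ih (G.subset_bridges_insert hB hf),
      G.ncomp_sdiff_insert_of_isBridge hfS, card_insert_of_notMem hf]
    omega

theorem subGenus_sdiff_union_bridges {S B : Finset ℕ} (hB : B ⊆ G.bridges S) :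
    G.subGenus G.V (G.E \ (S ∪ B)) = G.subGenus G.V (G.E \ S) := by
  have hBE : B ⊆ G.E \ S := hB.trans (filter_subset _ _)
  have hcard := card_sdiff_add_card_eq_card hBE
  rw [sdiff_sdiff_left, sup_eq_union] at hcard
  simp only [subGenus, inter_eq_left.2 sdiff_subset, G.ncomp_sdiff_union_bridges hB]
  push_cast
  omega

theorem ab_zero_union_bridges {S : Finset ℕ} (hS : S ⊆ G.E) : G.Ab 0 (S ∪ G.bridges S) := by
  refine ⟨union_subset hS ((filter_subset _ _).trans sdiff_subset), Or.inl ⟨rfl, fun e he => ?_⟩⟩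
  simpa [G.bridges_union subset_rfl] using G.mem_bridges.2 he

end Bridges

section Contraction

variable {S₀ : Finset ℕ}

theorem contract_E (S₀ : Finset ℕ) : (G.contract S₀).E = G.E \ S₀ := rfl

theorem mem_V_iff_of_eqvGen {F : Finset ℕ} {x y : ℕ} (h : EqvGen (G.adjOn F) x y) :
    x ∈ G.V ↔ y ∈ G.V :=
  Iff.of_eq <| EqvGen.apply_eq (f := (· ∈ G.V))
    (fun _ _ h' => propext (iff_of_true (G.adjOn_mem_V h').1 (G.adjOn_mem_V h').2)) h

theorem crep_eqvGen (S₀ : Finset ℕ) (v : ℕ) : EqvGen (G.conRel S₀) (G.crep S₀ v) v :=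
  Nat.sInf_mem (s := {u | EqvGen (G.conRel S₀) u v}) ⟨v, .refl v⟩

theorem crep_eq_iff {u v : ℕ} : G.crep S₀ u = G.crep S₀ v ↔ EqvGen (G.conRel S₀) u v := by
  refine ⟨fun h => ((G.crep_eqvGen S₀ u).symm _ _).trans _ _ _ (h ▸ G.crep_eqvGen S₀ v),
    fun h => ?_⟩
  unfold crep
  congr 1
  ext x
  exact ⟨fun hx => hx.trans _ _ _ h, fun hx => hx.trans _ _ _ (h.symm _ _)⟩

theorem crep_eq_of_mem_contract_V {v : ℕ} (hv : v ∈ (G.contract S₀).V) : G.crep S₀ v = v := by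
  obtain ⟨p, -, rfl⟩ := mem_image.1 hv
  exact G.crep_eq_iff.2 (G.crep_eqvGen S₀ p)

theorem contract_V_subset : (G.contract S₀).V ⊆ G.V := by
  intro v hv
  obtain ⟨p, hp, rfl⟩ := mem_image.1 hv
  exact (G.mem_V_iff_of_eqvGen (G.crep_eqvGen S₀ p)).2 hp

theorem eqvGen_adjOn_of_crep_eq {F : Finset ℕ} (hF : S₀ ⊆ F) {u v : ℕ}
    (h : G.crep S₀ u = G.crep S₀ v) : EqvGen (G.adjOn F) u v :=
  EqvGen.mono (G.adjOn_mono hF) _ _ (G.crep_eq_iff.1 h)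

/-- The fiber `γ⁻¹(v)` of the contraction `γ : G → G/S₀`. -/
noncomputable def fiber (S₀ : Finset ℕ) (v : ℕ) : Finset ℕ := G.V.filter fun u => G.crep S₀ u = v

theorem indEdges_fiber (S₀ : Finset ℕ) (v : ℕ) :
    G.indEdges (G.E \ S₀) (G.fiber S₀ v)
      = (G.E ∩ S₀).filter fun e => G.crep S₀ (G.ends e).1 = v := by
  ext e
  simp only [indEdges, fiber, mem_filter, mem_sdiff, mem_inter, not_and, not_not]
  constructor
  · rintro ⟨⟨he, hS₀⟩, ⟨-, h1⟩, -⟩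
    exact ⟨⟨he, hS₀ he⟩, h1⟩
  · rintro ⟨⟨he, heS₀⟩, h1⟩
    have h2 : G.crep S₀ (G.ends e).2 = v :=
      (G.crep_eq_iff.2 (.rel _ _ ⟨e, mem_inter.2 ⟨heS₀, he⟩, Or.inr rfl⟩)).trans h1
    exact ⟨⟨he, fun _ => heS₀⟩, ⟨(G.ends_mem e he).1, h1⟩, ⟨(G.ends_mem e he).2, h2⟩⟩

theorem ncomp_fiber {v : ℕ} (hv : v ∈ (G.contract S₀).V) :
    G.ncomp (G.fiber S₀ v) (G.indEdges (G.E \ S₀) (G.fiber S₀ v)) = 1 := by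
  obtain ⟨p, hp, hpv⟩ := mem_image.1 hv
  rw [ncomp, Nat.card_eq_one_iff_unique]
  refine ⟨⟨?_⟩, ⟨Quot.mk _ ⟨p, mem_filter.2 ⟨hp, hpv⟩⟩⟩⟩
  rintro ⟨u⟩ ⟨u'⟩
  apply Quot.eqvGen_sound
  have hu := mem_filter.1 u.2
  have hu' := mem_filter.1 u'.2
  -- a chain of contracted edges from `u` to `u'` never leaves the fiber
  have hchain := (eqvGen_subtype_iff (p := (· ∈ G.fiber S₀ v)) (fun x y hxy => ?_) u u').2
    (G.crep_eq_iff.1 (hu.2.trans hu'.2.symm))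
  · refine EqvGen.mono (fun a b ⟨e, he, hends⟩ => ⟨e, mem_inter.2 ⟨?_, (mem_inter.1 he).2⟩,
      hends⟩) _ _ hchain
    have ha := (mem_filter.1 a.2).2
    have hb := (mem_filter.1 b.2).2
    rcases hends with h | h <;> simp [G.indEdges_fiber, h, mem_inter.1 he, ha, hb]
  · have hxy' := G.adjOn_mem_V hxy
    have hcr : G.crep S₀ x = G.crep S₀ y := G.crep_eq_iff.2 (.rel _ _ hxy)
    simp [fiber, hxy'.1, hxy'.2, hcr]

theorem contract_w_eq {v : ℕ} (hv : v ∈ (G.contract S₀).V) :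
    ((G.contract S₀).w v : ℤ)
      = G.subGenus (G.fiber S₀ v) (G.indEdges (G.E \ S₀) (G.fiber S₀ v)) := by
  -- the fiber is connected, so its genus is nonnegative and the truncation in `w` is harmless
  have hcard := G.card_le_card_inter_add_ncomp (G.fiber S₀ v) (G.indEdges (G.E \ S₀) (G.fiber S₀ v))
  rw [G.ncomp_fiber hv] at hcard
  have hw : 0 ≤ ∑ u ∈ G.fiber S₀ v, (G.w u : ℤ) := sum_nonneg fun _ _ => Int.natCast_nonneg _
  show ((G.subGenus (G.fiber S₀ v) (G.indEdges (G.E \ S₀) (G.fiber S₀ v))).toNat : ℤ) = _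
  refine Int.toNat_of_nonneg ?_
  rw [subGenus, G.ncomp_fiber hv]
  push_cast
  omega

theorem sum_w_contract (S₀ : Finset ℕ) :
    ∑ v ∈ (G.contract S₀).V, ((G.contract S₀).w v : ℤ)
      = ∑ v ∈ G.V, (G.w v : ℤ) - G.V.card + (G.contract S₀).V.card + (G.E ∩ S₀).card := by
  have hV : ∀ u ∈ G.V, G.crep S₀ u ∈ (G.contract S₀).V := fun u hu => mem_image_of_mem _ hu
  have hE : ∀ e ∈ G.E ∩ S₀, G.crep S₀ (G.ends e).1 ∈ (G.contract S₀).V :=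
    fun e he => hV _ (G.ends_mem e (mem_inter.1 he).1).1
  have hfib : ∀ v ∈ (G.contract S₀).V, ((G.contract S₀).w v : ℤ)
      = ∑ u ∈ G.fiber S₀ v, (G.w u : ℤ) - (G.fiber S₀ v).card
        + ((G.E ∩ S₀).filter fun e => G.crep S₀ (G.ends e).1 = v).card + 1 := by
    intro v hv
    rw [G.contract_w_eq hv, subGenus, G.ncomp_fiber hv, G.indEdges_fiber,
      inter_eq_left.2 ((filter_subset _ _).trans inter_subset_left)]
    push_cast
    ring
  have hw : ∑ v ∈ (G.contract S₀).V, ∑ u ∈ G.fiber S₀ v, (G.w u : ℤ) = ∑ u ∈ G.V, (G.w u : ℤ) :=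
    sum_fiberwise_of_maps_to hV _
  have hVcard : ∑ v ∈ (G.contract S₀).V, ((G.fiber S₀ v).card : ℤ) = G.V.card := by
    exact_mod_cast (card_eq_sum_card_fiberwise hV).symm
  have hEcard : ∑ v ∈ (G.contract S₀).V,
      (((G.E ∩ S₀).filter fun e => G.crep S₀ (G.ends e).1 = v).card : ℤ) = (G.E ∩ S₀).card := by
    exact_mod_cast (card_eq_sum_card_fiberwise hE).symm
  rw [sum_congr rfl hfib, sum_add_distrib, sum_add_distrib, sum_sub_distrib, hw, hVcard, hEcard]
  simp only [sum_const, nsmul_eq_mul, mul_one]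
  ring

theorem ncomp_contract (S₀ F : Finset ℕ) :
    (G.contract S₀).ncomp (G.contract S₀).V F = G.ncomp G.V (F ∪ S₀) := by
  have hlink : ∀ {u v}, G.crep S₀ u = G.crep S₀ v → EqvGen (G.adjOn (F ∪ S₀)) u v :=
    G.eqvGen_adjOn_of_crep_eq subset_union_right
  refine card_quot_eq_of_maps (fun v => ⟨v.1, G.contract_V_subset v.2⟩)
    (fun u => ⟨G.crep S₀ u, mem_image_of_mem _ u.2⟩) (fun x y hxy => ?_) (fun u u' huu' => ?_)
    (fun u => ?_) (fun v => ?_)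
  · obtain ⟨e, he, hends⟩ := hxy
    have heF := (mem_inter.1 he).1
    have heE := (mem_sdiff.1 (mem_inter.1 he).2).1
    have hstep : EqvGen (G.adjOn (F ∪ S₀)) (G.ends e).1 (G.ends e).2 :=
      .rel _ _ ⟨e, mem_inter.2 ⟨mem_union_left _ heF, heE⟩, Or.inl rfl⟩
    refine (G.eqvGen_adjOn_subtype_iff _ _ _).2 ?_
    simp only [contract, Prod.ext_iff] at hends
    rcases hends with ⟨h1, h2⟩ | ⟨h1, h2⟩
    · refine ((hlink ?_).trans _ _ _ hstep).trans _ _ _ (hlink ?_)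
      · rw [h1, G.crep_eq_of_mem_contract_V x.2]
      · rw [h2, G.crep_eq_of_mem_contract_V y.2]
    · refine ((hlink ?_).trans _ _ _ (hstep.symm _ _)).trans _ _ _ (hlink ?_)
      · rw [h2, G.crep_eq_of_mem_contract_V x.2]
      · rw [h1, G.crep_eq_of_mem_contract_V y.2]
  · obtain ⟨e, he, hends⟩ := huu'
    have heE := (mem_inter.1 he).2
    by_cases heS₀ : e ∈ S₀
    · have : G.crep S₀ u = G.crep S₀ u' :=
        G.crep_eq_iff.2 (.rel _ _ ⟨e, mem_inter.2 ⟨heS₀, heE⟩, hends⟩)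
      simp only [this]
      exact .refl _
    · have heF : e ∈ F := (mem_union.1 (mem_inter.1 he).1).resolve_right heS₀
      refine .rel _ _ ⟨e, mem_inter.2 ⟨heF, mem_sdiff.2 ⟨heE, heS₀⟩⟩, ?_⟩
      rcases hends with h | h <;> simp [contract, h]
  · exact (G.eqvGen_adjOn_subtype_iff _ _ _).2 (hlink (G.crep_eq_iff.2 (G.crep_eqvGen S₀ u)))
  · simp only [G.crep_eq_of_mem_contract_V v.2]
    exact .refl _

theorem ncomp_contract_sdiff {U : Finset ℕ} (hU : Disjoint U S₀) :
    (G.contract S₀).ncomp (G.contract S₀).V ((G.contract S₀).E \ U) = G.ncomp G.V (G.E \ U) := by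
  rw [ncomp_contract]
  refine G.ncomp_congr _ (ext fun e => ?_)
  have : e ∈ U → e ∉ S₀ := fun h => disjoint_left.1 hU h
  simp only [contract, mem_inter, mem_union, mem_sdiff]
  tauto

theorem subGenus_contract {T : Finset ℕ} (hT : T ⊆ (G.contract S₀).E) :
    (G.contract S₀).subGenus (G.contract S₀).V ((G.contract S₀).E \ T)
      = G.subGenus G.V (G.E \ T) := by
  have hTS₀ := (subset_sdiff.1 hT).2
  have hinter : G.E \ T ∩ S₀ = G.E ∩ S₀ := by
    ext e
    have : e ∈ T → e ∉ S₀ := fun h => disjoint_left.1 hTS₀ h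
    simp only [mem_inter, mem_sdiff]
    tauto
  have hcard := card_sdiff_add_card_inter (G.E \ T) S₀
  rw [sdiff_right_comm, hinter] at hcard
  rw [subGenus, subGenus, G.ncomp_contract_sdiff hTS₀, G.sum_w_contract,
    inter_eq_left.2 sdiff_subset, inter_eq_left.2 sdiff_subset, contract_E]
  omega

theorem isBridge_contract {U : Finset ℕ} (hU : U ⊆ (G.contract S₀).E) {e : ℕ} :
    (G.contract S₀).IsBridge U e ↔ e ∉ S₀ ∧ G.IsBridge U e := by
  by_cases heS₀ : e ∈ S₀
  · simp [IsBridge, contract, heS₀]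
  have hUS₀ := (subset_sdiff.1 hU).2
  simp only [IsBridge, heS₀, not_false_eq_true, true_and, G.ncomp_contract_sdiff hUS₀,
    G.ncomp_contract_sdiff (disjoint_insert_left.2 ⟨heS₀, hUS₀⟩)]
  simp [contract, heS₀]

theorem bridges_contract {U : Finset ℕ} (hU : U ⊆ (G.contract S₀).E) :
    (G.contract S₀).bridges U = G.bridges U \ S₀ := by
  ext e
  rw [mem_sdiff, mem_bridges, mem_bridges, G.isBridge_contract hU, and_comm]

end Contraction

section Pullback

theorem pullStar_zero (T : Finset ℕ) : G.pullStar 0 T = T ∪ G.bridges T := if_pos rfl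

theorem pullStar_of_ne_zero {b : ℕ} (hb : b ≠ 0) (T : Finset ℕ) : G.pullStar b T = T :=
  if_neg hb

theorem ab_pullStar {b : ℕ} {S₀ T : Finset ℕ} (hT : (G.contract S₀).Ab b T) :
    G.Ab b (G.pullStar b T) := by
  obtain ⟨hTE, ⟨rfl, -⟩ | ⟨rfl, hconn⟩⟩ := hT
  · rw [pullStar_zero]
    exact G.ab_zero_union_bridges (hTE.trans sdiff_subset)
  · rw [G.pullStar_of_ne_zero one_ne_zero]
    refine ⟨hTE.trans sdiff_subset, Or.inr ⟨rfl, ?_⟩⟩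
    rwa [ConnSub, ← G.ncomp_contract_sdiff (subset_sdiff.1 hTE).2]

theorem subGenus_contract_sdiff_eq_pullStar (b : ℕ) {S₀ T : Finset ℕ}
    (hT : T ⊆ (G.contract S₀).E) :
    (G.contract S₀).subGenus (G.contract S₀).V ((G.contract S₀).E \ T)
      = G.subGenus G.V (G.E \ G.pullStar b T) := by
  rw [G.subGenus_contract hT]
  by_cases hb : b = 0
  · rw [hb, pullStar_zero, G.subGenus_sdiff_union_bridges subset_rfl]
  · rw [G.pullStar_of_ne_zero hb]

theorem pullStar_mono (b : ℕ) {T R : Finset ℕ} (hTR : T ⊆ R) :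
    G.pullStar b T ⊆ G.pullStar b R := by
  by_cases hb : b = 0
  · rw [hb, pullStar_zero, pullStar_zero]
    refine union_subset (hTR.trans subset_union_left) fun e he => ?_
    by_cases heR : e ∈ R
    · exact mem_union_left _ heR
    · exact mem_union_right _
        (G.mem_bridges.2 (G.isBridge_of_subset (G.mem_bridges.1 he) hTR heR))
  · simpa only [G.pullStar_of_ne_zero hb] using hTR

theorem pullStar_pullStar_contract (b : ℕ) {S₀ U : Finset ℕ} (hU : U ⊆ (G.contract S₀).E) :
    G.pullStar b ((G.contract S₀).pullStar b U) = G.pullStar b U := by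
  by_cases hb : b = 0
  · rw [hb, pullStar_zero, pullStar_zero, pullStar_zero, G.bridges_contract hU,
      G.bridges_union sdiff_subset]
    ext e
    simp only [mem_union, mem_sdiff]
    tauto
  · simp only [G.pullStar_of_ne_zero hb, (G.contract S₀).pullStar_of_ne_zero hb]

end Pullback

end WGraph

theorem pullback_contravariant_functor_general (G : WGraph) (b : ℕ)
    (S₀ : Finset ℕ) :
    (∀ T, (G.contract S₀).Ab b T →
      G.Ab b (G.pullStar b T) ∧
      (G.contract S₀).subGenus (G.contract S₀).V ((G.contract S₀).E \ T)
        = G.subGenus G.V (G.E \ G.pullStar b T)) ∧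
    (∀ T R, (G.contract S₀).Ab b T → (G.contract S₀).Ab b R → T ⊆ R →
      G.pullStar b T ⊆ G.pullStar b R) ∧
    (∀ T₀, T₀ ⊆ (G.contract S₀).E →
      ∀ U, ((G.contract S₀).contract T₀).Ab b U →
        G.pullStar b ((G.contract S₀).pullStar b U) = G.pullStar b U) :=
  ⟨fun _ hT => ⟨G.ab_pullStar hT, G.subGenus_contract_sdiff_eq_pullStar b hT.1⟩,
    fun _ _ _ _ hTR => G.pullStar_mono b hTR,
    fun _ _ _ hU => G.pullStar_pullStar_contract b (hU.1.trans sdiff_subset)⟩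

/-- Pullback `γ* T` (`:= T ∪ (G−T)_br` if `b = 0`, `:= T` if
`b = 1`) along a contraction `γ : G → H = G/S₀`: (a) `γ* T ∈ A^b_G` and
`g(H − T) = g(G − γ* T)`; (b) monotone; (c) contravariantly functorial. -/
theorem pullback_contravariant_functor (G : WGraph) (b : ℕ) (hb : b = 0 ∨ b = 1)
    (S₀ : Finset ℕ) (hS₀ : S₀ ⊆ G.E) :
    (∀ T, (G.contract S₀).Ab b T →
      G.Ab b (G.pullStar b T) ∧
      (G.contract S₀).subGenus (G.contract S₀).V ((G.contract S₀).E \ T)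
        = G.subGenus G.V (G.E \ G.pullStar b T)) ∧
    (∀ T R, (G.contract S₀).Ab b T → (G.contract S₀).Ab b R → T ⊆ R →
      G.pullStar b T ⊆ G.pullStar b R) ∧
    (∀ T₀, T₀ ⊆ (G.contract S₀).E →
      ∀ U, ((G.contract S₀).contract T₀).Ab b U →
        G.pullStar b ((G.contract S₀).pullStar b U) = G.pullStar b U) :=
  pullback_contravariant_functor_general G b S₀
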